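/- Let U ⊂ V be finite subsets of ℤ^d and let G^U, G^V be the Green functions of the discrete bilaplacian with Dirichlet (zero outside domain) conditions on U and V respectively. Then for every x ∈ U, G^V(x,x) ≥ G^U(x,x). -/

import Mathlib

open scoped BigOperators

/-- The discrete Laplacian on `ℤ^d`: `Δf(x) = (1/(2d)) Σ_{y∼x} (f(y) − f(x))`. -/
noncomputable def discLap (d : ℕ) (f : (Fin d → ℤ) → ℝ) (x : Fin d → ℤ) : ℝ :=
  (1 / (2 * (d : ℝ))) *
    ∑ i : Fin d, ((f (x + Pi.single i 1) - f x) + (f (x - Pi.single i 1) - f x))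

/-!
With `a = Δ G^U(x, ·)` and `b = Δ G^V(x, ·)`, summation by parts turns the Green equations into
the reproducing identities `⟪a, a⟫ = ⟪b, a⟫ = G^U(x, x)` and `⟪b, b⟫ = G^V(x, x)`, where
`⟪f, g⟫ = ∑ f g`; the middle one uses that `G^U(x, ·)` vanishes off `U ⊆ V`, so it is a valid
test function for the Green equation on `V`. Hence `0 ≤ ⟪b - a, b - a⟫ = G^V(x, x) - G^U(x, x)`.
-/

open Function

section Translation

variable {A : Type*} [AddGroup A]

theorem finsum_comp_add_right_mul (f g : A → ℝ) (v : A) :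
    ∑ᶠ y, f (y + v) * g y = ∑ᶠ y, f y * g (y - v) := by
  simpa using finsum_comp_equiv (Equiv.addRight v) (f := fun y => f y * g (y - v))

theorem finsum_comp_sub_right_mul (f g : A → ℝ) (v : A) :
    ∑ᶠ y, f (y - v) * g y = ∑ᶠ y, f y * g (y + v) := by
  simpa using finsum_comp_equiv (Equiv.subRight v) (f := fun y => f y * g (y + v))

theorem finsum_secondDiff_mul_comm {f g : A → ℝ} (hf : f.HasFiniteSupport)
    (hg : g.HasFiniteSupport) (v : A) :
    ∑ᶠ y, ((f (y + v) - f y) + (f (y - v) - f y)) * g y =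
      ∑ᶠ y, f y * ((g (y + v) - g y) + (g (y - v) - g y)) := by
  simp (disch := fun_prop) only [add_mul, sub_mul, mul_add, mul_sub, finsum_add_distrib,
    finsum_sub_distrib, finsum_comp_add_right_mul, finsum_comp_sub_right_mul]
  ring

end Translation

theorem hasFiniteSupport_of_eq_zero_off {α M : Type*} [Zero M] {W : Finset α} {f : α → M}
    (hf : ∀ y ∉ W, f y = 0) : f.HasFiniteSupport :=
  W.finite_toSet.subset (support_subset_iff'.2 hf)

theorem two_mul_finsum_mul_le {α : Type*} {a b : α → ℝ} (ha : a.HasFiniteSupport)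
    (hb : b.HasFiniteSupport) :
    2 * ∑ᶠ y, a y * b y ≤ ∑ᶠ y, a y * a y + ∑ᶠ y, b y * b y := by
  rw [mul_finsum, ← finsum_add_distrib (by fun_prop) (by fun_prop)]
  exact finsum_le_finsum' (by fun_prop) (by fun_prop) fun y => by
    nlinarith [sq_nonneg (a y - b y)]

section Lattice

variable {d : ℕ}

@[fun_prop]
theorem Function.HasFiniteSupport.discLap {f : (Fin d → ℤ) → ℝ} (hf : f.HasFiniteSupport) :
    (discLap d f).HasFiniteSupport := by
  unfold _root_.discLap
  -- the discharger proves injectivity of the translations `y ↦ y ± eᵢ`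
  fun_prop (disch := exact fun _ _ h => by simpa using h)

theorem finsum_discLap_mul_comm {f g : (Fin d → ℤ) → ℝ} (hf : f.HasFiniteSupport)
    (hg : g.HasFiniteSupport) :
    ∑ᶠ y, discLap d f y * g y = ∑ᶠ y, f y * discLap d g y := by
  simp only [discLap, mul_assoc, mul_left_comm (f _), Finset.sum_mul, Finset.mul_sum]
  rw [finsum_sum_comm _ _ fun _ _ => by fun_prop, finsum_sum_comm _ _ fun _ _ => by fun_prop]
  refine Finset.sum_congr rfl fun i _ => ?_
  rw [← mul_finsum, ← mul_finsum, finsum_secondDiff_mul_comm hf hg]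

theorem finsum_discLap_mul_discLap_eq_of_green {W : Finset (Fin d → ℤ)} {G f : (Fin d → ℤ) → ℝ}
    {x : Fin d → ℤ} (hx : x ∈ W) (hG : ∀ y ∉ W, G y = 0)
    (hGreen : ∀ y ∈ W, discLap d (discLap d G) y = if y = x then 1 else 0)
    (hf : ∀ y ∉ W, f y = 0) :
    ∑ᶠ y, discLap d G y * discLap d f y = f x := by
  have hGfin := hasFiniteSupport_of_eq_zero_off hG
  rw [← finsum_discLap_mul_comm hGfin.discLap (hasFiniteSupport_of_eq_zero_off hf),
    finsum_eq_finsetSum_of_support_subset (s := W) _ fun y hy => ?_]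
  · rw [Finset.sum_congr rfl fun y hy => by rw [hGreen y hy]]
    simp [hx]
  · by_contra hyW
    simp [hf y hyW] at hy

end Lattice

theorem green_monotone_general (d : ℕ) (U V : Finset (Fin d → ℤ)) (hUV : U ⊆ V)
    (GU GV : (Fin d → ℤ) → (Fin d → ℤ) → ℝ)
    (hGUsupp₂ : ∀ x y, y ∉ U → GU x y = 0)
    (hGUgreen : ∀ x, ∀ y ∈ U, discLap d (discLap d (GU x)) y = if y = x then 1 else 0)
    (hGVsupp₂ : ∀ x y, y ∉ V → GV x y = 0)
    (hGVgreen : ∀ x, ∀ y ∈ V, discLap d (discLap d (GV x)) y = if y = x then 1 else 0) :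
    ∀ x ∈ U, GU x x ≤ GV x x := by
  intro x hx
  have hGUV : ∀ y ∉ V, GU x y = 0 := fun y hy => hGUsupp₂ x y (mt (@hUV y) hy)
  have hUU : ∑ᶠ y, discLap d (GU x) y * discLap d (GU x) y = GU x x :=
    finsum_discLap_mul_discLap_eq_of_green hx (hGUsupp₂ x) (hGUgreen x) (hGUsupp₂ x)
  have hVU : ∑ᶠ y, discLap d (GV x) y * discLap d (GU x) y = GU x x :=
    finsum_discLap_mul_discLap_eq_of_green (hUV hx) (hGVsupp₂ x) (hGVgreen x) hGUV
  have hVV : ∑ᶠ y, discLap d (GV x) y * discLap d (GV x) y = GV x x :=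
    finsum_discLap_mul_discLap_eq_of_green (hUV hx) (hGVsupp₂ x) (hGVgreen x) (hGVsupp₂ x)
  have := two_mul_finsum_mul_le (hasFiniteSupport_of_eq_zero_off (hGVsupp₂ x)).discLap
    (hasFiniteSupport_of_eq_zero_off (hGUsupp₂ x)).discLap
  linarith

/-- Monotonicity of the Green function of the discrete bilaplacian with Dirichlet
(zero outside the domain) conditions: if `U ⊆ V` are finite subsets of `ℤ^d` then
`G^V(x,x) ≥ G^U(x,x)` for every `x ∈ U`. -/
theorem green_monotone (d : ℕ) (U V : Finset (Fin d → ℤ)) (hUV : U ⊆ V)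
    (GU GV : (Fin d → ℤ) → (Fin d → ℤ) → ℝ)
    (hGUsupp₁ : ∀ x y, x ∉ U → GU x y = 0)
    (hGUsupp₂ : ∀ x y, y ∉ U → GU x y = 0)
    (hGUgreen : ∀ x, ∀ y ∈ U, discLap d (discLap d (GU x)) y = if y = x then 1 else 0)
    (hGVsupp₁ : ∀ x y, x ∉ V → GV x y = 0)
    (hGVsupp₂ : ∀ x y, y ∉ V → GV x y = 0)
    (hGVgreen : ∀ x, ∀ y ∈ V, discLap d (discLap d (GV x)) y = if y = x then 1 else 0) :
    ∀ x ∈ U, GU x x ≤ GV x x :=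
  green_monotone_general d U V hUV GU GV hGUsupp₂ hGUgreen hGVsupp₂ hGVgreen
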